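/- Reduction cost correspondence (Hamming case): under the DECIS'-3-Hamming to DECIS-2-Hamming reduction, for all strings v, w over Σ of equal length, δ₃(v,w) ≤ h if and only if δ₂(E(v), E(w)) ≤ 3h, where δ₃ is the distance using the allowed unit-cost 3-substitutions and δ₂ is the distance using the reduction's unit-cost 2-substitutions. -/

import Mathlib

/-- The augmented alphabet of the reduction from DECIS'-3-Hamming to
DECIS-2-Hamming: window pairs over `Σ ∪ {$}` (with `$` modelled by `none`),
plus the marker symbols `S⁻_{(ab)(de)}` and `S⁺_{(bc)(ef)}`. -/
inductive WSym (α : Type*) where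
  | pair : Option α → Option α → WSym α
  | left : α × α → α × α → WSym α
  | right : α × α → α × α → WSym α

/-- The `$`-padded version of a string. -/
def padS {α : Type*} (v : List α) : List (Option α) :=
  none :: (v.map some ++ [none])

/-- The sliding-window encoding of `v`: the length-`(n+1)` string of overlapping
pairs of consecutive symbols of `$v$`. -/
def encS {α : Type*} (v : List α) : List (WSym α) :=
  ((padS v).zip (padS v).tail).map fun q => WSym.pair q.1 q.2

/-- A `2`-substitution rewriting the factor `[x, y]` into `[x', y']`. -/
def Sub2 {β : Type*} (x y x' y' : β) (v w : List β) : Prop :=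
  ∃ p s : List β, v = p ++ [x, y] ++ s ∧ w = p ++ [x', y'] ++ s

/-- One application of an allowed `3`-substitution from `D`. -/
def Step3 {α : Type*} (D : Set ((α × α × α) × (α × α × α))) (v w : List α) : Prop :=
  ∃ r ∈ D, ∃ p s : List α,
    v = p ++ [r.1.1, r.1.2.1, r.1.2.2] ++ s ∧ w = p ++ [r.2.1, r.2.2.1, r.2.2.2] ++ s

/-- One application of a cost-1 `2`-substitution of the reduction: for each allowed
`3`-substitution `abc → def` in `D` we have `(ab)(bc) → S⁻_{(ab)(de)} S⁺_{(bc)(ef)}`,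
`(xa) S⁻_{(ab)(de)} → (xd)(de)` for all `x ∈ Σ ∪ {$}`, and
`S⁺_{(bc)(ef)} (cy) → (ef)(fy)` for all `y ∈ Σ ∪ {$}`.  All other
`2`-substitutions are forbidden. -/
def Step2 {α : Type*} (D : Set ((α × α × α) × (α × α × α))) (v w : List (WSym α)) : Prop :=
  ∃ a b c d e f : α, ((a, b, c), (d, e, f)) ∈ D ∧
    (Sub2 (WSym.pair (some a) (some b)) (WSym.pair (some b) (some c))
        (WSym.left (a, b) (d, e)) (WSym.right (b, c) (e, f)) v w ∨
     (∃ x : Option α, Sub2 (WSym.pair x (some a)) (WSym.left (a, b) (d, e))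
        (WSym.pair x (some d)) (WSym.pair (some d) (some e)) v w) ∨
     (∃ y : Option α, Sub2 (WSym.right (b, c) (e, f)) (WSym.pair (some c) y)
        (WSym.pair (some e) (some f)) (WSym.pair (some f) y) v w))

/-- A sequence of `m` steps of the relation `r` from `v` to `w`. -/
inductive StepChain {β : Type*} (r : β → β → Prop) : β → β → ℕ → Prop
  | refl (v : β) : StepChain r v v 0
  | tail {v u w : β} {m : ℕ} : StepChain r v u m → r u w → StepChain r v w (m + 1)

/-- Minimum number of steps of the relation `r` transforming `v` into `w`. -/
noncomputable def rDist {β : Type*} (r : β → β → Prop) (v w : β) : ℕ∞ :=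
  sInf {c : ℕ∞ | ∃ m : ℕ, StepChain r v w m ∧ c = (m : ℕ∞)}

/-! Each allowed substitution `abc → def` is simulated on the window encoding by three moves:
`(ab)(bc) → S⁻ S⁺`, after which each marker is absorbed together with its outer neighbouring window.
Conversely, every string reachable from `E(v)` is read left to right by a small transducer that
recovers the base string with all pending substitutions completed and counts the markers. A move
either opens a new site, which is an allowed 3-substitution of the decoded string and adds two
markers, or absorbs a marker; hence `3 · #(3-substitutions) = #moves + #markers`. Strings the
transducer cannot read contain a right marker directly followed by a left marker; that factor
can never be rewritten, so such strings never reach `E(w)`. -/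

namespace StepChain

variable {β γ : Type*} {r : β → β → Prop}

theorem trans {a b c : β} {m n : ℕ} (h₁ : StepChain r a b m) (h₂ : StepChain r b c n) :
    StepChain r a c (m + n) := by
  induction h₂ with
  | refl => exact h₁
  | tail _ hst ih => exact ih.tail hst

theorem map_mul {s : γ → γ → Prop} {f : β → γ} {c : ℕ}
    (hf : ∀ ⦃a b⦄, r a b → StepChain s (f a) (f b) c) {a b : β} {m : ℕ}
    (h : StepChain r a b m) : StepChain s (f a) (f b) (c * m) := by
  induction h with
  | refl => exact .refl _
  | tail _ hst ih => exact Nat.mul_succ c _ ▸ ih.trans (hf hst)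

/-- In `Inv u z k`, `k` counts the `r`-steps still owed to the `s`-steps already made. -/
theorem amortized_simulation {s : γ → γ → Prop} (Inv : β → γ → ℕ → Prop)
    (Bad : β → Prop)
    (hstep : ∀ ⦃u u' z k⦄, Inv u z k → r u u' →
      (∃ z', s z z' ∧ Inv u' z' (k + 2)) ∨ (∃ k', k = k' + 1 ∧ Inv u' z k') ∨ Bad u')
    (hbad : ∀ ⦃u u'⦄, Bad u → r u u' → Bad u') {u₀ u : β} {z₀ : γ} {m : ℕ}
    (h₀ : Inv u₀ z₀ 0) (h : StepChain r u₀ u m) :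
    (∃ z t k, Inv u z k ∧ StepChain s z₀ z t ∧ m + k = 3 * t) ∨ Bad u := by
  induction h with
  | refl => exact .inl ⟨z₀, 0, 0, h₀, .refl _, rfl⟩
  | tail _ hst ih =>
    rcases ih with ⟨z, t, k, hinv, hch, hmk⟩ | hb
    · rcases hstep hinv hst with ⟨z', hs, hinv'⟩ | ⟨k', rfl, hinv'⟩ | hb
      · exact .inl ⟨z', t + 1, k + 2, hinv', hch.tail hs, by omega⟩
      · exact .inl ⟨z, t, k', hinv', hch, by omega⟩
      · exact .inr hb
    · exact .inr (hbad hb hst)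

end StepChain

theorem rDist_le_coe_iff {β : Type*} {r : β → β → Prop} {v w : β} {n : ℕ} :
    rDist r v w ≤ n ↔ ∃ m ≤ n, StepChain r v w m := by
  constructor
  · intro h
    have hne : {c : ℕ∞ | ∃ m : ℕ, StepChain r v w m ∧ c = m}.Nonempty := by
      by_contra hempty
      simp [rDist, Set.not_nonempty_iff_eq_empty.mp hempty] at h
    obtain ⟨m, hm, heq⟩ := csInf_mem hne
    refine ⟨m, ?_, hm⟩
    rw [rDist, heq] at h
    exact_mod_cast h
  · rintro ⟨m, hmn, hm⟩
    calc rDist r v w ≤ m := sInf_le ⟨m, hm, rfl⟩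
      _ ≤ n := by exact_mod_cast hmn

theorem List.exists_of_map_some_append_none {α : Type*} {z : List α}
    {T₁ T₂ : List (Option α)} {a b c : α}
    (h : z.map some ++ [none] = T₁ ++ [some a, some b, some c] ++ T₂) :
    ∃ z₁ z₂, z = z₁ ++ [a, b, c] ++ z₂ ∧ T₁ = z₁.map some ∧
      T₂ = z₂.map some ++ [none] := by
  induction T₁ generalizing z with
  | nil =>
    rcases z with _ | ⟨a', _ | ⟨b', _ | ⟨c', z⟩⟩⟩ <;> simp at h
    obtain ⟨rfl, rfl, rfl, rfl⟩ := h
    exact ⟨[], z, rfl, rfl, rfl⟩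
  | cons x T₁ ih =>
    rcases z with _ | ⟨a', z⟩
    · simp at h
    · simp only [List.map_cons, List.cons_append, List.cons.injEq] at h
      obtain ⟨z₁, z₂, rfl, rfl, rfl⟩ := ih h.2
      exact ⟨a' :: z₁, z₂, rfl, by rw [← h.1]; rfl, rfl⟩

namespace WSym

variable {α : Type*} {D : Set ((α × α × α) × (α × α × α))}

def windows : Option α → List (Option α) → List (WSym α)
  | _, [] => []
  | x, y :: l => pair x y :: windows y l

theorem windows_append (x : Option α) (l₁ l₂ : List (Option α)) :
    windows x (l₁ ++ l₂) = windows x l₁ ++ windows (l₁.getLastD x) l₂ := by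
  induction l₁ generalizing x with
  | nil => rfl
  | cons y l ih => simp only [List.cons_append, windows, ih, List.getLastD_cons]

theorem map_zip_eq_windows (x : Option α) (l : List (Option α)) :
    ((x :: l).zip l).map (fun q => pair q.1 q.2) = windows x l := by
  induction l generalizing x with
  | nil => rfl
  | cons y l ih => simp [windows, ← ih y]

theorem encS_eq_windows (v : List α) : encS v = windows none (v.map some ++ [none]) :=
  map_zip_eq_windows _ _

theorem encS_append_three (p s : List α) : ∃ A X Y B, ∀ a b c : α,
    encS (p ++ [a, b, c] ++ s) = A ++
      [pair X (some a), pair (some a) (some b), pair (some b) (some c), pair (some c) Y] ++ B := by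
  obtain ⟨Y, l, hYl⟩ : ∃ Y l, s.map some ++ [(none : Option α)] = Y :: l :=
    List.exists_cons_of_ne_nil (by simp)
  refine ⟨windows none (p.map some), (p.map some).getLastD none, Y, windows Y l,
    fun a b c => ?_⟩
  rw [encS_eq_windows, List.map_append, List.append_assoc, windows_append, List.map_append,
    List.append_assoc, windows_append, hYl]
  simp [windows]

theorem stepChain_encS_of_step3 {v w : List α} (h : Step3 D v w) :
    StepChain (Step2 D) (encS v) (encS w) 3 := by
  obtain ⟨⟨⟨a, b, c⟩, d, e, f⟩, hr, p, s, rfl, rfl⟩ := h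
  obtain ⟨A, X, Y, B, henc⟩ := encS_append_three p s
  rw [henc, henc]
  refine .tail (u := A ++ [pair X (some d), pair (some d) (some e), right (b, c) (e, f),
      pair (some c) Y] ++ B)
    (.tail (u := A ++ [pair X (some a), left (a, b) (d, e), right (b, c) (e, f),
      pair (some c) Y] ++ B) (.tail (.refl _) ?_) ?_) ?_
  · exact ⟨a, b, c, d, e, f, hr,
      .inl ⟨A ++ [pair X (some a)], pair (some c) Y :: B, by simp, by simp⟩⟩
  · exact ⟨a, b, c, d, e, f, hr,
      .inr (.inl ⟨X, A, right (b, c) (e, f) :: pair (some c) Y :: B, by simp, by simp⟩)⟩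
  · exact ⟨a, b, c, d, e, f, hr,
      .inr (.inr ⟨Y, A ++ [pair X (some d), pair (some d) (some e)], B, by simp, by simp⟩)⟩

theorem stepChain_encS {v w : List α} {m : ℕ} (h : StepChain (Step3 D) v w m) :
    StepChain (Step2 D) (encS v) (encS w) (3 * m) :=
  h.map_mul fun _ _ => stepChain_encS_of_step3

/-- `letter x`: the next symbol must carry `x` as its left letter; `marker a d`: the next symbol
must be a left marker `S⁻_{(a·)(d·)}`. -/
inductive ParseState (α : Type*) where
  | letter : Option α → ParseState α
  | marker : α → α → ParseState α

/-- `Parse S T u E k`: `u` is read from state `S` to state `E`, it carries the letters `T` once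
every pending substitution is completed, and it contains `k` markers. A symbol directly before a
left marker `S⁻_{(ab)(de)}` carries `d` instead of `a` (the `Retarget` rules). -/
inductive Parse :
    ParseState α → List (Option α) → List (WSym α) → ParseState α → ℕ → Prop
  | nil (S) : Parse S [] [] S 0
  | pair {T u E k} (x y) : Parse (.letter y) T u E k →
      Parse (.letter x) (y :: T) (.pair x y :: u) E k
  | pairRetarget {T u E k} (x) (a d : α) : Parse (.marker a d) T u E k →
      Parse (.letter x) (some d :: T) (.pair x (some a) :: u) E k
  | left {T u E k} (a b d e : α) : Parse (.letter (some e)) T u E k →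
      Parse (.marker a d) (some e :: T) (.left (a, b) (d, e) :: u) E (k + 1)
  | leftRetarget {T u E k} (a b d a' d' : α) : Parse (.marker a' d') T u E k →
      Parse (.marker a d) (some d' :: T) (.left (a, b) (d, a') :: u) E (k + 1)
  | right {T u E k} (b c e f : α) : Parse (.letter (some c)) T u E k →
      Parse (.letter (some e)) (some f :: T) (.right (b, c) (e, f) :: u) E (k + 1)

theorem Parse.append {S M E : ParseState α} {T₁ T₂ : List (Option α)}
    {u₁ u₂ : List (WSym α)} {k₁ k₂ : ℕ} (h₁ : Parse S T₁ u₁ M k₁) (h₂ : Parse M T₂ u₂ E k₂) :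
    Parse S (T₁ ++ T₂) (u₁ ++ u₂) E (k₁ + k₂) := by
  induction h₁ with
  | nil => simpa using h₂
  | pair x y _ ih => exact .pair x y (ih h₂)
  | pairRetarget x a d _ ih => exact .pairRetarget x a d (ih h₂)
  | left a b d e _ ih => exact Nat.add_right_comm .. ▸ .left a b d e (ih h₂)
  | leftRetarget a b d a' d' _ ih =>
    exact Nat.add_right_comm .. ▸ .leftRetarget a b d a' d' (ih h₂)
  | right b c e f _ ih => exact Nat.add_right_comm .. ▸ .right b c e f (ih h₂)

theorem Parse.exists_of_append {S E : ParseState α} {T : List (Option α)}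
    {u₁ u₂ : List (WSym α)} {k : ℕ} (h : Parse S T (u₁ ++ u₂) E k) :
    ∃ T₁ T₂ M k₁ k₂, T = T₁ ++ T₂ ∧ k = k₁ + k₂ ∧
      Parse S T₁ u₁ M k₁ ∧ Parse M T₂ u₂ E k₂ := by
  induction u₁ generalizing S T k with
  | nil => exact ⟨[], T, S, 0, k, rfl, (zero_add k).symm, .nil S, h⟩
  | cons W u₁ ih =>
    cases h with
    | pair x y h =>
      obtain ⟨T₁, T₂, M, k₁, k₂, rfl, rfl, h₁, h₂⟩ := ih h
      exact ⟨_, T₂, M, k₁, k₂, rfl, rfl, .pair x y h₁, h₂⟩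
    | pairRetarget x a d h =>
      obtain ⟨T₁, T₂, M, k₁, k₂, rfl, rfl, h₁, h₂⟩ := ih h
      exact ⟨_, T₂, M, k₁, k₂, rfl, rfl, .pairRetarget x a d h₁, h₂⟩
    | left a b d e h =>
      obtain ⟨T₁, T₂, M, k₁, k₂, rfl, rfl, h₁, h₂⟩ := ih h
      exact ⟨_, T₂, M, k₁ + 1, k₂, rfl, by omega, .left a b d e h₁, h₂⟩
    | leftRetarget a b d a' d' h =>
      obtain ⟨T₁, T₂, M, k₁, k₂, rfl, rfl, h₁, h₂⟩ := ih h
      exact ⟨_, T₂, M, k₁ + 1, k₂, rfl, by omega, .leftRetarget a b d a' d' h₁, h₂⟩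
    | right b c e f h =>
      obtain ⟨T₁, T₂, M, k₁, k₂, rfl, rfl, h₁, h₂⟩ := ih h
      exact ⟨_, T₂, M, k₁ + 1, k₂, rfl, by omega, .right b c e f h₁, h₂⟩

theorem parse_windows (x : Option α) (l : List (Option α)) :
    Parse (.letter x) l (windows x l) (.letter (l.getLastD x)) 0 := by
  induction l generalizing x with
  | nil => exact .nil _
  | cons y l ih => simpa only [List.getLastD_cons] using .pair x y (ih y)

theorem Parse.eq_of_windows {x y : Option α} {l T : List (Option α)} {k : ℕ}
    (h : Parse (.letter x) T (windows x l) (.letter y) k) : T = l ∧ k = 0 := by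
  induction l generalizing x T k with
  | nil => cases h; exact ⟨rfl, rfl⟩
  | cons z l ih =>
    cases h with
    | pair _ _ h => obtain ⟨rfl, rfl⟩ := ih h; exact ⟨rfl, rfl⟩
    | pairRetarget _ a d h => cases l <;> cases h

theorem Parse.retarget {S : ParseState α} {T : List (Option α)} {p : List (WSym α)} {a : α}
    {k : ℕ} (h : Parse S T p (.letter (some a)) k) :
    (p = [] ∧ S = .letter (some a)) ∨ (∃ p' q r, p = p' ++ [.right q r]) ∨
      ∃ T', T = T' ++ [some a] ∧ ∀ d, Parse S (T' ++ [some d]) p (.marker a d) k := by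
  generalize hE : ParseState.letter (some a) = E at h
  induction h with
  | nil => exact .inl ⟨rfl, rfl⟩
  | pair x y h ih =>
    rcases ih hE with ⟨rfl, rfl⟩ | ⟨p', q, r, rfl⟩ | ⟨T', rfl, hT'⟩
    · cases h
      cases hE
      exact .inr (.inr ⟨[], rfl, fun d => .pairRetarget x a d (.nil _)⟩)
    · exact .inr (.inl ⟨_ :: p', q, r, rfl⟩)
    · exact .inr (.inr ⟨y :: T', rfl, fun d => .pair x y (hT' d)⟩)
  | pairRetarget x a' d' h ih =>
    rcases ih hE with ⟨-, rfl⟩ | ⟨p', q, r, rfl⟩ | ⟨T', rfl, hT'⟩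
    · cases hE
    · exact .inr (.inl ⟨_ :: p', q, r, rfl⟩)
    · exact .inr (.inr ⟨_ :: T', rfl, fun d => .pairRetarget x a' d' (hT' d)⟩)
  | left a' b d' e h ih =>
    rcases ih hE with ⟨rfl, rfl⟩ | ⟨p', q, r, rfl⟩ | ⟨T', rfl, hT'⟩
    · cases h
      cases hE
      exact .inr (.inr ⟨[], rfl, fun d => .leftRetarget a' b d' a d (.nil _)⟩)
    · exact .inr (.inl ⟨_ :: p', q, r, rfl⟩)
    · exact .inr (.inr ⟨_ :: T', rfl, fun d => .left a' b d' e (hT' d)⟩)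
  | leftRetarget a' b d' a'' d'' h ih =>
    rcases ih hE with ⟨-, rfl⟩ | ⟨p', q, r, rfl⟩ | ⟨T', rfl, hT'⟩
    · cases hE
    · exact .inr (.inl ⟨_ :: p', q, r, rfl⟩)
    · exact .inr (.inr ⟨_ :: T', rfl, fun d => .leftRetarget a' b d' a'' d'' (hT' d)⟩)
  | right b c e f h ih =>
    rcases ih hE with ⟨rfl, -⟩ | ⟨p', q, r, rfl⟩ | ⟨T', rfl, hT'⟩
    · exact .inr (.inl ⟨[], _, _, rfl⟩)
    · exact .inr (.inl ⟨_ :: p', q, r, rfl⟩)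
    · exact .inr (.inr ⟨_ :: T', rfl, fun d => .right b c e f (hT' d)⟩)

theorem Parse.resolve_left {M E : ParseState α} {T : List (Option α)} {x : Option α}
    {a b d e : α} {s : List (WSym α)} {k : ℕ}
    (h : Parse M T (.pair x (some a) :: .left (a, b) (d, e) :: s) E k) :
    ∃ k', k = k' + 1 ∧ Parse M T (.pair x (some d) :: .pair (some d) (some e) :: s) E k' := by
  rcases h with _ | ⟨_, _, h⟩ | ⟨_, _, _, h⟩
  · cases h
  · rcases h with _ | _ | _ | ⟨_, _, _, _, h⟩ | ⟨_, _, _, _, _, h⟩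
    · exact ⟨_, rfl, .pair _ _ (.pair _ _ h)⟩
    · exact ⟨_, rfl, .pair _ _ (.pairRetarget _ _ _ h)⟩

theorem Parse.resolve_right {M E : ParseState α} {T : List (Option α)} {y : Option α}
    {b c e f : α} {s : List (WSym α)} {k : ℕ}
    (h : Parse M T (.right (b, c) (e, f) :: .pair (some c) y :: s) E k) :
    ∃ k', k = k' + 1 ∧ Parse M T (.pair (some e) (some f) :: .pair (some f) y :: s) E k' := by
  rcases h with _ | _ | _ | _ | _ | ⟨_, _, _, _, h⟩
  rcases h with _ | ⟨_, _, h⟩ | ⟨_, _, _, h⟩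
  · exact ⟨_, rfl, .pair _ _ (.pair _ _ h)⟩
  · exact ⟨_, rfl, .pair _ _ (.pairRetarget _ _ _ h)⟩

def CanPrecede : WSym α → WSym α → Prop
  | .right _ _, .left _ _ => False
  | _, _ => True

/-- A right marker directly followed by a left marker can never be rewritten: each of them is
only consumed together with an adjacent pair on the side where the other one sits. -/
def Unblocked (u : List (WSym α)) : Prop :=
  u.IsChain CanPrecede

theorem Unblocked.of_replace {p s : List (WSym α)} {A B A' B' : WSym α}
    (hA : ∀ x, CanPrecede x A) (hAB : CanPrecede A B) (hB : ∀ y, CanPrecede B y)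
    (h : Unblocked (p ++ [A', B'] ++ s)) : Unblocked (p ++ [A, B] ++ s) :=
  (h.left_of_append.left_of_append.append (.cons_cons hAB (.singleton B)) (by simp [hA])).append
    h.right_of_append (by simp [hB])

theorem Unblocked.of_step2 {u u' : List (WSym α)}
    (hs : Step2 D u u') (h : Unblocked u') : Unblocked u := by
  obtain ⟨a, b, c, d, e, f, -, hs⟩ := hs
  rcases hs with ⟨p, s, rfl, rfl⟩ | ⟨x, p, s, rfl, rfl⟩ | ⟨y, p, s, rfl, rfl⟩ <;>
    exact h.of_replace (by rintro (_ | _ | _) <;> trivial) trivial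
      (by rintro (_ | _ | _) <;> trivial)

theorem unblocked_windows (x : Option α) (l : List (Option α)) : Unblocked (windows x l) := by
  induction l generalizing x with
  | nil => exact .nil
  | cons y l ih => exact (ih y).cons (by simp [CanPrecede])

theorem unblocked_encS (w : List α) : Unblocked (encS w) :=
  encS_eq_windows w ▸ unblocked_windows _ _

def Represents (u : List (WSym α)) (z : List α) (k : ℕ) : Prop :=
  Parse (.letter none) (z.map some ++ [none]) u (.letter none) k

theorem represents_encS (v : List α) : Represents (encS v) v 0 := by
  rw [Represents, encS_eq_windows]
  have h := parse_windows none (v.map some ++ [none])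
  rwa [List.getLastD_concat] at h

theorem Represents.eq_of_encS {z w : List α} {k : ℕ} (h : Represents (encS w) z k) :
    z = w ∧ k = 0 := by
  rw [Represents, encS_eq_windows] at h
  obtain ⟨hzw, rfl⟩ := h.eq_of_windows
  exact ⟨List.map_injective_iff.mpr (Option.some_injective α) (List.append_cancel_right hzw),
    rfl⟩

theorem Represents.resolve {p s s' : List (WSym α)} {z : List α} {k : ℕ}
    (h : Represents (p ++ s) z k)
    (hs : ∀ {M T j}, Parse M T s (.letter none) j →
      ∃ j', j = j' + 1 ∧ Parse M T s' (.letter none) j') :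
    ∃ k', k = k' + 1 ∧ Represents (p ++ s') z k' := by
  obtain ⟨T₁, T₂, M, k₁, k₂, hT, rfl, hp, hs₂⟩ := h.exists_of_append
  obtain ⟨k', rfl, hs'⟩ := hs hs₂
  refine ⟨k₁ + k', by omega, ?_⟩
  rw [Represents, hT]
  exact hp.append hs'

theorem Represents.substitute {p s : List (WSym α)} {z : List α} {a b c d e f : α} {k : ℕ}
    (h : Represents (p ++ [.pair (some a) (some b), .pair (some b) (some c)] ++ s) z k) :
    (∃ z₁ z₂, z = z₁ ++ [a, b, c] ++ z₂ ∧
      Represents (p ++ [.left (a, b) (d, e), .right (b, c) (e, f)] ++ s) (z₁ ++ [d, e, f] ++ z₂)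
        (k + 2)) ∨
      ¬ Unblocked (p ++ [.left (a, b) (d, e), .right (b, c) (e, f)] ++ s) := by
  rw [Represents, List.append_assoc] at h
  obtain ⟨T₁, T₂, M, k₁, k₂, hT, rfl, hp, hs⟩ := h.exists_of_append
  rcases hs with _ | ⟨_, _, hs⟩ | ⟨_, _, _, hs⟩
  · rcases hs with _ | ⟨_, _, hs⟩ | ⟨_, _, _, hs⟩
    · rcases hp.retarget with ⟨-, hM⟩ | ⟨p', q, r, rfl⟩ | ⟨T', rfl, hp'⟩
      · cases hM
      · exact .inr (by simp [Unblocked, CanPrecede])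
      · obtain ⟨z₁, z₂, rfl, rfl, rfl⟩ :=
          List.exists_of_map_some_append_none (by simpa using hT)
        refine .inl ⟨z₁, z₂, rfl, ?_⟩
        simpa [Represents, Nat.add_assoc] using (hp' d).append (.left a b d e (.right b c e f hs))
    · rcases hs with _ | _ | _ | ⟨_, _, _, _, hs⟩ | ⟨_, _, _, _, _, hs⟩ <;>
      exact .inr (by simp [Unblocked, CanPrecede])
  · cases hs

theorem Represents.step2 {u u' : List (WSym α)} {z : List α} {k : ℕ} (h : Represents u z k)
    (hs : Step2 D u u') :
    (∃ z', Step3 D z z' ∧ Represents u' z' (k + 2)) ∨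
      (∃ k', k = k' + 1 ∧ Represents u' z k') ∨ ¬ Unblocked u' := by
  obtain ⟨a, b, c, d, e, f, hr, hs⟩ := hs
  rcases hs with ⟨p, s, rfl, rfl⟩ | ⟨x, p, s, rfl, rfl⟩ | ⟨y, p, s, rfl, rfl⟩
  · rcases h.substitute with ⟨z₁, z₂, rfl, h'⟩ | hb
    · exact .inl ⟨_, ⟨_, hr, z₁, z₂, rfl, rfl⟩, h'⟩
    · exact .inr (.inr hb)
  · exact .inr (.inl (by simpa using (List.append_assoc .. ▸ h).resolve Parse.resolve_left))
  · exact .inr (.inl (by simpa using (List.append_assoc .. ▸ h).resolve Parse.resolve_right))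

end WSym

theorem reduction_cost_correspondence_general {α : Type*} (D : Set ((α × α × α) × (α × α × α)))
    (h : ℕ) (v w : List α) :
    rDist (Step3 D) v w ≤ (h : ℕ∞) ↔
      rDist (Step2 D) (encS v) (encS w) ≤ ((3 * h : ℕ) : ℕ∞) := by
  simp only [rDist_le_coe_iff]
  constructor
  · rintro ⟨m, hm, hch⟩
    exact ⟨3 * m, by omega, WSym.stepChain_encS hch⟩
  · rintro ⟨m, hm, hch⟩
    rcases hch.amortized_simulation WSym.Represents (fun u => ¬ WSym.Unblocked u)
        (fun _ _ _ _ hrep hs => hrep.step2 hs) (fun _ _ hb hs hu => hb (hu.of_step2 hs))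
        (WSym.represents_encS v) with ⟨z, t, k, hrep, hch₃, hmk⟩ | hb
    · obtain ⟨rfl, rfl⟩ := hrep.eq_of_encS
      exact ⟨t, by omega, hch₃⟩
    · exact absurd (WSym.unblocked_encS w) hb

/-- Reduction cost correspondence (Hamming case): for equal-length strings `v, w`
over `Σ`, `δ₃(v,w) ≤ h` iff `δ₂(E(v),E(w)) ≤ 3h`, where `δ₃` uses the allowed
unit-cost `3`-substitutions and `δ₂` the reduction's unit-cost `2`-substitutions. -/
theorem reduction_cost_correspondence {α : Type*} (D : Set ((α × α × α) × (α × α × α)))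
    (h : ℕ) (v w : List α) (hlen : v.length = w.length) :
    rDist (Step3 D) v w ≤ (h : ℕ∞) ↔
      rDist (Step2 D) (encS v) (encS w) ≤ ((3 * h : ℕ) : ℕ∞) :=
  reduction_cost_correspondence_general D h v w
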